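/- Let (ξ₁,…,ξ_k) be a uniformly random sample without replacement from {1,…,n} (k ≤ n), set ζ_i = ξ_i/n, and for a function f : [0,1] → ℝ define the martingale differences Z_j = E_j[S] − E_{j−1}[S] where S = ∑_{i=1}^k f(ζ_i) and E_j is conditional expectation given ξ₁,…,ξ_j. Then Z_j = ((n−k)/(n−j)) · (f(ζ_j) − E_{j−1} f(ζ_j)). -/

import Mathlib

open Finset in
/-- Conditional expectation of `F` given the first `j` coordinates of a uniformly random
sample without replacement (an injective tuple) from `{1,…,n}`. -/
noncomputable def condExpSWOR (n k : ℕ) (j : ℕ) (F : (Fin k ↪ Fin n) → ℝ)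
    (σ : Fin k ↪ Fin n) : ℝ :=
  (∑ τ ∈ univ.filter (fun τ : Fin k ↪ Fin n => ∀ i : Fin k, (i : ℕ) < j → τ i = σ i), F τ) /
  ((univ.filter (fun τ : Fin k ↪ Fin n => ∀ i : Fin k, (i : ℕ) < j → τ i = σ i)).card : ℝ)

/-!
Conditioned on its first `j` coordinates, every later coordinate of a uniform injective tuple is
uniform on the `n - j` values not yet drawn: transposing two such values is a bijection of the
conditioning set that exchanges the corresponding fibres. Hence, writing `P_j` for the sum of `g`
over the first `j` drawn values and `T` for the sum of `g` over all `n` values,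
`E_j S = P_j + (k - j) (T - P_j) / (n - j)`, and the identity is algebra in `P_{j-1}`, `g(σ_j)`
and `T`.
-/

open Finset

theorem Fin.sum_filter_val_lt_eq_add {M : Type*} [AddCommMonoid M] {k j : ℕ} (h : Fin k → M)
    (hj : 1 ≤ j) (hjk : j ≤ k) :
    ∑ i : Fin k with i.val < j, h i =
      ∑ i : Fin k with i.val < j - 1, h i + h ⟨j - 1, Nat.sub_one_lt_of_le hj hjk⟩ := by
  have : univ.filter (fun i : Fin k => i.val < j) =
      insert ⟨j - 1, Nat.sub_one_lt_of_le hj hjk⟩ (univ.filter fun i : Fin k => i.val < j - 1) := by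
    ext i
    simp only [mem_insert, mem_filter, mem_univ, true_and, Fin.ext_iff]
    omega
  rw [this, sum_insert (by simp), add_comm]

namespace SWOR

variable {n k : ℕ}

noncomputable def prefixCylinder (j : ℕ) (σ : Fin k ↪ Fin n) : Finset (Fin k ↪ Fin n) :=
  {τ | ∀ i : Fin k, (i : ℕ) < j → τ i = σ i}

def prefixValues (j : ℕ) (σ : Fin k ↪ Fin n) : Finset (Fin n) :=
  ({i : Fin k | i.val < j} : Finset (Fin k)).map σ

section

variable {j : ℕ} {σ : Fin k ↪ Fin n}

theorem condExpSWOR_eq_sum_div (F : (Fin k ↪ Fin n) → ℝ) :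
    condExpSWOR n k j F σ = (∑ τ ∈ prefixCylinder j σ, F τ) / #(prefixCylinder j σ) := rfl

theorem self_mem_prefixCylinder : σ ∈ prefixCylinder j σ := by
  simp [prefixCylinder]

theorem condExpSWOR_finset_sum {ι : Type*} (s : Finset ι) (F : ι → (Fin k ↪ Fin n) → ℝ) :
    condExpSWOR n k j (fun τ => ∑ i ∈ s, F i τ) σ = ∑ i ∈ s, condExpSWOR n k j (F i) σ := by
  simp only [condExpSWOR_eq_sum_div, sum_comm (s := prefixCylinder j σ), sum_div]

theorem condExpSWOR_apply_of_lt (g : Fin n → ℝ) {i : Fin k} (hi : (i : ℕ) < j) :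
    condExpSWOR n k j (fun τ => g (τ i)) σ = g (σ i) := by
  have hA : (#(prefixCylinder j σ) : ℝ) ≠ 0 := by
    exact_mod_cast (card_pos.2 ⟨σ, self_mem_prefixCylinder⟩).ne'
  rw [condExpSWOR_eq_sum_div, sum_congr rfl fun τ hτ => by
    rw [(mem_filter.1 hτ).2 i hi], sum_const, nsmul_eq_mul, mul_div_cancel_left₀ _ hA]

theorem apply_notMem_prefixValues {τ : Fin k ↪ Fin n} (hτ : τ ∈ prefixCylinder j σ)
    {i : Fin k} (hi : j ≤ (i : ℕ)) : τ i ∉ prefixValues j σ := by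
  simp only [prefixValues, prefixCylinder, mem_map, mem_filter, mem_univ, true_and] at hτ ⊢
  rintro ⟨l, hl, hli⟩
  have hl_eq : l = i := τ.injective ((hτ l hl).trans hli)
  omega

theorem card_prefixValues (hjk : j ≤ k) : #(prefixValues j σ) = j := by
  rw [prefixValues, card_map, Fin.card_filter_val_lt, min_eq_right hjk]

theorem sum_prefixValues (g : Fin n → ℝ) :
    ∑ a ∈ prefixValues j σ, g a = ∑ i : Fin k with i.val < j, g (σ i) :=
  sum_map _ _ _

theorem swap_mem_prefixCylinder {a b : Fin n} (ha : a ∉ prefixValues j σ)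
    (hb : b ∉ prefixValues j σ) {τ : Fin k ↪ Fin n} (hτ : τ ∈ prefixCylinder j σ) :
    τ.trans (Equiv.swap a b).toEmbedding ∈ prefixCylinder j σ := by
  simp only [prefixValues, prefixCylinder, mem_map, mem_filter, mem_univ, true_and,
    not_exists, not_and] at ha hb hτ ⊢
  intro l hl
  simp only [Function.Embedding.trans_apply, Equiv.coe_toEmbedding, hτ l hl]
  exact Equiv.swap_apply_of_ne_of_ne (ha l hl) (hb l hl)

theorem card_filter_apply_eq_of_notMem (i : Fin k) {a b : Fin n}
    (ha : a ∉ prefixValues j σ) (hb : b ∉ prefixValues j σ) :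
    #{τ ∈ prefixCylinder j σ | τ i = a} = #{τ ∈ prefixCylinder j σ | τ i = b} := by
  have swap_swap : ∀ τ : Fin k ↪ Fin n,
      (τ.trans (Equiv.swap a b).toEmbedding).trans (Equiv.swap a b).toEmbedding = τ := by
    intro τ; ext; simp
  refine card_nbij' (fun τ => τ.trans (Equiv.swap a b).toEmbedding)
    (fun τ => τ.trans (Equiv.swap a b).toEmbedding) ?_ ?_ (fun τ _ => swap_swap τ)
    (fun τ _ => swap_swap τ) <;>
  · intro τ hτ
    simp only [coe_filter, Set.mem_ofPred_eq] at hτ ⊢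
    exact ⟨swap_mem_prefixCylinder ha hb hτ.1, by simp [hτ.2]⟩

theorem condExpSWOR_apply_of_le (g : Fin n → ℝ) {i : Fin k} (hi : j ≤ (i : ℕ)) :
    condExpSWOR n k j (fun τ => g (τ i)) σ =
      (∑ a ∈ (prefixValues j σ)ᶜ, g a) / #(prefixValues j σ)ᶜ := by
  set A := prefixCylinder j σ
  set U := (prefixValues j σ)ᶜ
  set N := #{τ ∈ A | τ i = σ i}
  have hmaps : ∀ τ ∈ A, τ i ∈ U := fun τ hτ => mem_compl.2 (apply_notMem_prefixValues hτ hi)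
  have hfiber : ∀ a ∈ U, #{τ ∈ A | τ i = a} = N := fun a ha =>
    card_filter_apply_eq_of_notMem i (mem_compl.1 ha)
      (apply_notMem_prefixValues self_mem_prefixCylinder hi)
  have hsum : ∑ τ ∈ A, g (τ i) = N * ∑ a ∈ U, g a := by
    rw [← sum_fiberwise_of_maps_to' hmaps, mul_sum]
    refine sum_congr rfl fun a ha => ?_
    rw [sum_const, hfiber a ha, nsmul_eq_mul]
  have hcard : #A = #U * N := by
    rw [card_eq_sum_card_fiberwise hmaps, sum_congr rfl hfiber, sum_const, smul_eq_mul]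
  have hσ : σ ∈ {τ ∈ A | τ i = σ i} := mem_filter.2 ⟨self_mem_prefixCylinder, rfl⟩
  have hN : (N : ℝ) ≠ 0 := by exact_mod_cast (card_pos.2 ⟨σ, hσ⟩).ne'
  rw [condExpSWOR_eq_sum_div, hsum, hcard, Nat.cast_mul, mul_comm (N : ℝ),
    mul_div_mul_right _ _ hN]

theorem sum_compl_prefixValues (g : Fin n → ℝ) :
    ∑ a ∈ (prefixValues j σ)ᶜ, g a = ∑ a, g a - ∑ i : Fin k with i.val < j, g (σ i) := by
  rw [← sum_prefixValues, ← sum_compl_add_sum (prefixValues j σ), add_sub_cancel_right]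

theorem card_compl_prefixValues (hjk : j ≤ k) : (#(prefixValues j σ)ᶜ : ℝ) = n - j := by
  rw [card_compl, Nat.cast_sub (card_le_univ _), card_prefixValues hjk, Fintype.card_fin]

theorem condExpSWOR_sum_apply (g : Fin n → ℝ) (hjk : j ≤ k) :
    condExpSWOR n k j (fun τ => ∑ i, g (τ i)) σ =
      ∑ i : Fin k with i.val < j, g (σ i) +
        (k - j) * (∑ a, g a - ∑ i : Fin k with i.val < j, g (σ i)) / (n - j) := by
  have hlate : #{i : Fin k | ¬ i.val < j} = k - j := by
    have := card_filter_add_card_filter_not (s := univ) (fun i : Fin k => i.val < j)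
    rw [Fin.card_filter_val_lt, card_univ, Fintype.card_fin] at this
    omega
  rw [condExpSWOR_finset_sum, ← sum_filter_add_sum_filter_not univ (fun i : Fin k => i.val < j),
    sum_congr rfl fun i hi => condExpSWOR_apply_of_lt g (mem_filter.1 hi).2,
    sum_congr rfl fun i hi => condExpSWOR_apply_of_le g (not_lt.1 (mem_filter.1 hi).2),
    sum_const, hlate, nsmul_eq_mul, Nat.cast_sub hjk, sum_compl_prefixValues,
    card_compl_prefixValues hjk, mul_div_assoc]

end

theorem condExpSWOR_sum_sub_condExpSWOR_sum (g : Fin n → ℝ) {j : ℕ} (hj : 1 ≤ j)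
    (hjk : j ≤ k) (hjn : j < n) (σ : Fin k ↪ Fin n) :
    condExpSWOR n k j (fun τ => ∑ i, g (τ i)) σ -
      condExpSWOR n k (j - 1) (fun τ => ∑ i, g (τ i)) σ =
    ((n - k) / (n - j)) *
      (g (σ ⟨j - 1, Nat.sub_one_lt_of_le hj hjk⟩) -
        condExpSWOR n k (j - 1) (fun τ => g (τ ⟨j - 1, Nat.sub_one_lt_of_le hj hjk⟩)) σ) := by
  rw [condExpSWOR_sum_apply g hjk, condExpSWOR_sum_apply g (by omega),
    condExpSWOR_apply_of_le (j := j - 1) (i := ⟨j - 1, Nat.sub_one_lt_of_le hj hjk⟩) g le_rfl,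
    sum_compl_prefixValues, card_compl_prefixValues (by omega),
    Fin.sum_filter_val_lt_eq_add _ hj hjk, Nat.cast_pred hj]
  have hjn' : (j : ℝ) < n := by exact_mod_cast hjn
  have hnj : (n : ℝ) - j ≠ 0 := by linarith
  have hnj' : (n : ℝ) - (j - 1) ≠ 0 := by linarith
  field_simp
  ring

end SWOR

theorem stmt12 (n k j : ℕ) (hj : 1 ≤ j) (hjk : j ≤ k) (hjn : j < n)
    (f : ℝ → ℝ) (σ : Fin k ↪ Fin n) :
    condExpSWOR n k j
        (fun τ => ∑ i : Fin k, f ((((τ i : Fin n) : ℕ) + 1 : ℝ) / n)) σ -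
    condExpSWOR n k (j - 1)
        (fun τ => ∑ i : Fin k, f ((((τ i : Fin n) : ℕ) + 1 : ℝ) / n)) σ =
    (((n : ℝ) - k) / ((n : ℝ) - j)) *
      (f ((((σ ⟨j - 1, by omega⟩ : Fin n) : ℕ) + 1 : ℝ) / n) -
        condExpSWOR n k (j - 1)
          (fun τ => f ((((τ ⟨j - 1, by omega⟩ : Fin n) : ℕ) + 1 : ℝ) / n)) σ) := by
  exact SWOR.condExpSWOR_sum_sub_condExpSWOR_sum (fun a => f (((a : ℕ) + 1 : ℝ) / n))
    hj hjk hjn σ
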